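/- arXiv:1410.0901 — 7 statements merged into one kernel-verified Lean document; each statement's English description precedes it below -/
import Mathlib

section
/- Let m ≥ 1, n ≥ 0 be integers and P_{m,n} = {(i,j,k) ∈ ℕ³ : 4i+j ≤ 4m, 4i+k ≤ 4m+n, 8i+2j+k ≤ 8m+n}. Let (a,b,c) ∈ ℕ³ be nonzero, f(i,j,k) = ai+bj+ck, and m' = max{f(v) : v ∈ P_{m,n}}. If b > max(a/4, 2c) and c ≠ 0, then f(v) = m' for v ∈ P_{m,n} if and only if v = (0, 4m, n). -/
/-!
The gap `f(0, 4m, n) - f(i, j, k)` equals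
`(4b - a) i + (b - 2c) (4m - 4i - j) + c (8m + n - 8i - 2j - k)`,
a combination of the slacks of `i ≥ 0` and of the first and third defining inequalities of
`P_{m,n}` with nonnegative weights. It vanishes only when `i = 0` and both inequalities are
tight, which forces `(i, j, k) = (0, 4m, n)`.
-/

/-- Membership in `P_{m,n} ⊂ ℕ³`. -/
def memP (m n i j k : ℕ) : Prop :=
  4 * i + j ≤ 4 * m ∧ 4 * i + k ≤ 4 * m + n ∧ 8 * i + 2 * j + k ≤ 8 * m + n

theorem memP_zero_four_mul (m n : ℕ) : memP m n 0 (4 * m) n :=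
  ⟨by omega, by omega, by omega⟩

section LinearForm

variable {m n i j k a b c : ℕ}

theorem linearForm_add_weighted_slack_eq (hP : memP m n i j k) (hba : a ≤ 4 * b)
    (hcb : 2 * c ≤ b) :
    a * i + b * j + c * k + ((4 * b - a) * i + (b - 2 * c) * (4 * m - (4 * i + j)) +
      c * (8 * m + n - (8 * i + 2 * j + k))) = a * 0 + b * (4 * m) + c * n := by
  obtain ⟨h₁, -, h₃⟩ := hP
  zify [hba, hcb, h₁, h₃]
  ring

theorem linearForm_le_of_memP (hP : memP m n i j k) (hba : a ≤ 4 * b) (hcb : 2 * c ≤ b) :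
    a * i + b * j + c * k ≤ a * 0 + b * (4 * m) + c * n := by
  rw [← linearForm_add_weighted_slack_eq hP hba hcb]
  exact Nat.le_add_right _ _

theorem eq_zero_four_mul_of_linearForm_eq (hP : memP m n i j k) (hba : a < 4 * b) (hcb : 2 * c < b)
    (hc : c ≠ 0) (heq : a * i + b * j + c * k = a * 0 + b * (4 * m) + c * n) :
    i = 0 ∧ j = 4 * m ∧ k = n := by
  have hgap := linearForm_add_weighted_slack_eq hP hba.le hcb.le
  rw [heq, Nat.add_eq_left] at hgap
  simp only [Nat.add_eq_zero_iff, mul_eq_zero] at hgap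
  obtain ⟨h₁, -, h₃⟩ := hP
  omega

end LinearForm

theorem unique_maximizer_case1_general (m n : ℕ)
    (a b c : ℕ)
    (hba : 4 * b > a) (hbc : b > 2 * c) (hc : c ≠ 0) :
    memP m n 0 (4 * m) n ∧
    (∀ i j k : ℕ, memP m n i j k →
      a * i + b * j + c * k ≤ a * 0 + b * (4 * m) + c * n) ∧
    (∀ i j k : ℕ, memP m n i j k →
      a * i + b * j + c * k = a * 0 + b * (4 * m) + c * n →
      i = 0 ∧ j = 4 * m ∧ k = n) :=
  ⟨memP_zero_four_mul m n,
    fun _ _ _ hP => linearForm_le_of_memP hP hba.le hbc.le,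
    fun _ _ _ hP => eq_zero_four_mul_of_linearForm_eq hP hba hbc hc⟩

/-- If `4b > a`, `b > 2c` and `c ≠ 0`, then `(0, 4m, n)` lies in `P_{m,n}` and is
the unique maximizer of the linear form `f(i,j,k) = ai + bj + ck` on `P_{m,n}`. -/
theorem unique_maximizer_case1 (m n : ℕ) (hm : 1 ≤ m)
    (a b c : ℕ) (habc : ¬(a = 0 ∧ b = 0 ∧ c = 0))
    (hba : 4 * b > a) (hbc : b > 2 * c) (hc : c ≠ 0) :
    memP m n 0 (4 * m) n ∧
    (∀ i j k : ℕ, memP m n i j k →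
      a * i + b * j + c * k ≤ a * 0 + b * (4 * m) + c * n) ∧
    (∀ i j k : ℕ, memP m n i j k →
      a * i + b * j + c * k = a * 0 + b * (4 * m) + c * n →
      i = 0 ∧ j = 4 * m ∧ k = n) :=
  unique_maximizer_case1_general m n a b c hba hbc hc
end

section
/- With notation as before (P_{m,n} ⊂ ℕ³ defined by 4i+j ≤ 4m, 4i+k ≤ 4m+n, 8i+2j+k ≤ 8m+n; f(i,j,k) = ai+bj+ck with (a,b,c) ∈ ℕ³ nonzero; m' = max of f on P_{m,n}): if 4b > a and c = 0, then the set of maximizers of f on P_{m,n} is exactly {(0, 4m, d) : 0 ≤ d ≤ n}. -/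
/-!
On `P_{m,n}` the first constraint gives `4i + j ≤ 4m`, so `ai + bj = b(4i + j) - (4b - a)i ≤ 4bm`.
When `a < 4b` equality forces `i = 0` and `j = 4m`, and the third constraint then reads `k ≤ n`.
-/

namespace memP

variable {m n i j k : ℕ}

theorem zero_four_mul {d : ℕ} (hd : d ≤ n) : memP m n 0 (4 * m) d :=
  ⟨by omega, by omega, by omega⟩

theorem mul_add_mul_add_sub_mul_le (h : memP m n i j k) {a b : ℕ} (hab : a ≤ 4 * b) :
    a * i + b * j + (4 * b - a) * i ≤ b * (4 * m) :=
  calc a * i + b * j + (4 * b - a) * i = b * (4 * i + j) := by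
        rw [add_right_comm, ← add_mul, Nat.add_sub_cancel' hab]; ring
    _ ≤ b * (4 * m) := Nat.mul_le_mul_left b h.1

theorem eq_zero_and_eq_four_mul_of_le (h : memP m n i j k) {a b : ℕ} (hab : a < 4 * b)
    (hle : b * (4 * m) ≤ a * i + b * j) : i = 0 ∧ j = 4 * m := by
  have hbound := h.mul_add_mul_add_sub_mul_le hab.le
  have hi : i = 0 := by
    have hzero : (4 * b - a) * i = 0 := by omega
    simpa [Nat.sub_eq_zero_iff_le, hab.not_ge] using hzero
  subst hi
  have hj : 4 * m ≤ j := Nat.le_of_mul_le_mul_left (by simpa using hle) (by omega)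
  exact ⟨rfl, le_antisymm (by simpa using h.1) hj⟩

end memP

theorem maximizers_case2_general (m n : ℕ)
    (a b c : ℕ)
    (hba : 4 * b > a) (hc : c = 0) :
    (∀ d : ℕ, d ≤ n → memP m n 0 (4 * m) d) ∧
    (∀ i j k : ℕ, memP m n i j k →
      ((∀ i' j' k' : ℕ, memP m n i' j' k' →
          a * i' + b * j' + c * k' ≤ a * i + b * j + c * k) ↔
        (i = 0 ∧ j = 4 * m ∧ k ≤ n))) := by
  subst hc
  refine ⟨fun d hd => memP.zero_four_mul hd, fun i j k hP => ⟨fun hmax => ?_, ?_⟩⟩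
  · have hcorner := hmax 0 (4 * m) 0 (memP.zero_four_mul n.zero_le)
    obtain ⟨rfl, rfl⟩ := hP.eq_zero_and_eq_four_mul_of_le hba (by simpa using hcorner)
    exact ⟨rfl, rfl, by have := hP.2.2; omega⟩
  · rintro ⟨rfl, rfl, -⟩ i' j' k' hP'
    have := hP'.mul_add_mul_add_sub_mul_le hba.le
    simp only [zero_mul, add_zero, mul_zero]
    omega

/-- If `4b > a` and `c = 0`, then the set of maximizers of `f(i,j,k) = ai + bj + ck`
on `P_{m,n}` is exactly `{(0, 4m, d) : 0 ≤ d ≤ n}`. -/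
theorem maximizers_case2 (m n : ℕ) (hm : 1 ≤ m)
    (a b c : ℕ) (habc : ¬(a = 0 ∧ b = 0 ∧ c = 0))
    (hba : 4 * b > a) (hc : c = 0) :
    (∀ d : ℕ, d ≤ n → memP m n 0 (4 * m) d) ∧
    (∀ i j k : ℕ, memP m n i j k →
      ((∀ i' j' k' : ℕ, memP m n i' j' k' →
          a * i' + b * j' + c * k' ≤ a * i + b * j + c * k) ↔
        (i = 0 ∧ j = 4 * m ∧ k ≤ n))) :=
  maximizers_case2_general m n a b c hba hc
end

section
/- With P_{m,n} = {(i,j,k) ∈ ℕ³ : 4i+j ≤ 4m, 4i+k ≤ 4m+n, 8i+2j+k ≤ 8m+n}, f(i,j,k) = ai+bj+ck with a,b,c ∈ ℕ not all zero, and m' the maximum of f on P_{m,n}: if 2c > b, 4c > a − 2b, and b ≠ 0, then the unique maximizer of f on P_{m,n} is (0, 2m, 4m+n). -/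
/-! With the slacks `s₂ = 4m + n - (4i + k)` and `s₃ = 8m + n - (8i + 2j + k)` of the last two
constraints, twice the gap `f(0, 2m, 4m + n) - f(i, j, k)` equals `b s₃ + (2c - b) s₂ + (4b + 8c - 2a) i`.
Under the hypotheses all three coefficients are positive, so the gap is nonnegative on `P_{m,n}`
and vanishes only when `s₂ = s₃ = i = 0`, which pins the point down to `(0, 2m, 4m + n)`. -/

theorem two_mul_objective_gap_eq {R : Type*} [CommRing R] (m n a b c i j k : R) :
    2 * (a * 0 + b * (2 * m) + c * (4 * m + n) - (a * i + b * j + c * k)) =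
      b * (8 * m + n - (8 * i + 2 * j + k)) + (2 * c - b) * (4 * m + n - (4 * i + k)) +
        (4 * b + 8 * c - 2 * a) * i := by
  ring

theorem memP_vertex (m n : ℕ) : memP m n 0 (2 * m) (4 * m + n) :=
  ⟨by omega, by omega, by omega⟩

section

variable {m n a b c i j k : ℕ}

theorem objective_le_of_memP (hcb : b ≤ 2 * c) (hca : (a : ℤ) ≤ 2 * b + 4 * c)
    (h : memP m n i j k) : a * i + b * j + c * k ≤ a * 0 + b * (2 * m) + c * (4 * m + n) := by
  obtain ⟨-, h₂, h₃⟩ := h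
  zify at hcb h₂ h₃ ⊢
  linarith [two_mul_objective_gap_eq (m : ℤ) n a b c i j k,
    mul_nonneg (Int.natCast_nonneg b) (sub_nonneg.2 h₃),
    mul_nonneg (sub_nonneg.2 hcb : (0 : ℤ) ≤ 2 * c - b) (sub_nonneg.2 h₂),
    mul_nonneg (by linarith : (0 : ℤ) ≤ 4 * b + 8 * c - 2 * a) (Int.natCast_nonneg i)]

theorem eq_vertex_of_memP_of_objective_eq (hb : b ≠ 0) (hcb : b < 2 * c)
    (hca : (a : ℤ) < 2 * b + 4 * c) (h : memP m n i j k)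
    (heq : a * i + b * j + c * k = a * 0 + b * (2 * m) + c * (4 * m + n)) :
    i = 0 ∧ j = 2 * m ∧ k = 4 * m + n := by
  obtain ⟨-, h₂, h₃⟩ := h
  have hb : 1 ≤ b := Nat.one_le_iff_ne_zero.mpr hb
  zify at hb hcb h₂ h₃ heq
  -- each coefficient is at least one, so the vanishing gap bounds the sum of the slacks
  have : (8 * m + n - (8 * i + 2 * j + k) : ℤ) + (4 * m + n - (4 * i + k)) + i ≤ 0 := by
    linarith [two_mul_objective_gap_eq (m : ℤ) n a b c i j k,
      mul_le_mul_of_nonneg_right hb (sub_nonneg.2 h₃),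
      mul_le_mul_of_nonneg_right (by linarith : (1 : ℤ) ≤ 2 * c - b) (sub_nonneg.2 h₂),
      mul_le_mul_of_nonneg_right (by linarith : (1 : ℤ) ≤ 4 * b + 8 * c - 2 * a)
        (Int.natCast_nonneg i)]
  omega

end

theorem unique_maximizer_case3_general (m n : ℕ)
    (a b c : ℕ)
    (hcb : 2 * c > b) (hca : (4 : ℤ) * c > (a : ℤ) - 2 * b) (hb : b ≠ 0) :
    memP m n 0 (2 * m) (4 * m + n) ∧
    (∀ i j k : ℕ, memP m n i j k →
      a * i + b * j + c * k ≤ a * 0 + b * (2 * m) + c * (4 * m + n)) ∧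
    (∀ i j k : ℕ, memP m n i j k →
      a * i + b * j + c * k = a * 0 + b * (2 * m) + c * (4 * m + n) →
      i = 0 ∧ j = 2 * m ∧ k = 4 * m + n) := by
  have hca' : (a : ℤ) < 2 * b + 4 * c := by linarith
  exact ⟨memP_vertex m n, fun _ _ _ => objective_le_of_memP hcb.le hca'.le,
    fun _ _ _ => eq_vertex_of_memP_of_objective_eq hb hcb hca'⟩

/-- If `2c > b`, `4c > a − 2b` (over `ℤ`) and `b ≠ 0`, then `(0, 2m, 4m+n)` lies in
`P_{m,n}` and is the unique maximizer of `f(i,j,k) = ai + bj + ck` on `P_{m,n}`. -/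
theorem unique_maximizer_case3 (m n : ℕ) (hm : 1 ≤ m)
    (a b c : ℕ) (habc : ¬(a = 0 ∧ b = 0 ∧ c = 0))
    (hcb : 2 * c > b) (hca : (4 : ℤ) * c > (a : ℤ) - 2 * b) (hb : b ≠ 0) :
    memP m n 0 (2 * m) (4 * m + n) ∧
    (∀ i j k : ℕ, memP m n i j k →
      a * i + b * j + c * k ≤ a * 0 + b * (2 * m) + c * (4 * m + n)) ∧
    (∀ i j k : ℕ, memP m n i j k →
      a * i + b * j + c * k = a * 0 + b * (2 * m) + c * (4 * m + n) →
      i = 0 ∧ j = 2 * m ∧ k = 4 * m + n) :=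
  unique_maximizer_case3_general m n a b c hcb hca hb
end

section
/- For integers m ≥ 1, n ≥ 0, the maximum over P_{m,n} = {(i,j,k) ∈ ℕ³ : 4i+j ≤ 4m, 4i+k ≤ 4m+n, 8i+2j+k ≤ 8m+n} of the linear form f(i,j,k) = ai+bj+ck (a,b,c ∈ ℕ) equals m·max(a, 4b, 2b+4c) + cn. -/
lemma mul_add_mul_le_of_two_mul_le {b c j k t n : ℕ} (hbc : 2 * c ≤ b)
    (hj : j ≤ 4 * t) (hjk : 2 * j + k ≤ 8 * t + n) :
    b * j + c * k ≤ 4 * b * t + c * n := by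
  obtain ⟨d, rfl⟩ := Nat.exists_eq_add_of_le hbc
  calc (2 * c + d) * j + c * k = d * j + c * (2 * j + k) := by ring
    _ ≤ d * (4 * t) + c * (8 * t + n) := by gcongr
    _ = 4 * (2 * c + d) * t + c * n := by ring

lemma mul_add_mul_le_of_le_two_mul {b c j k t n : ℕ} (hbc : b ≤ 2 * c)
    (hk : k ≤ 4 * t + n) (hjk : 2 * j + k ≤ 8 * t + n) :
    b * j + c * k ≤ (2 * b + 4 * c) * t + c * n := by
  obtain ⟨d, hd⟩ := Nat.exists_eq_add_of_le hbc
  suffices 2 * (b * j + c * k) ≤ 2 * ((2 * b + 4 * c) * t + c * n) by omega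
  calc 2 * (b * j + c * k) = b * (2 * j + k) + d * k := by linear_combination k * hd
    _ ≤ b * (8 * t + n) + d * (4 * t + n) := by gcongr
    _ = 2 * ((2 * b + 4 * c) * t + c * n) := by linear_combination (4 * t + n) * hd.symm

lemma mul_add_mul_le_max {b c j k t n : ℕ} (hj : j ≤ 4 * t) (hk : k ≤ 4 * t + n)
    (hjk : 2 * j + k ≤ 8 * t + n) :
    b * j + c * k ≤ max (4 * b) (2 * b + 4 * c) * t + c * n := by
  rcases le_total (2 * c) b with hbc | hbc
  · exact (mul_add_mul_le_of_two_mul_le hbc hj hjk).trans (by gcongr; exact le_max_left _ _)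
  · exact (mul_add_mul_le_of_le_two_mul hbc hk hjk).trans (by gcongr; exact le_max_right _ _)

lemma linear_form_le_of_memP {m n i j k : ℕ} (a b c : ℕ) (h : memP m n i j k) :
    a * i + b * j + c * k ≤ m * max a (max (4 * b) (2 * b + 4 * c)) + c * n := by
  obtain ⟨h₁, h₂, h₃⟩ := h
  obtain ⟨t, rfl⟩ : ∃ t, m = i + t := ⟨m - i, by omega⟩
  have hjk := mul_add_mul_le_max (b := b) (c := c) (by omega : j ≤ 4 * t)
    (by omega : k ≤ 4 * t + n) (by omega : 2 * j + k ≤ 8 * t + n)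
  set M := max a (max (4 * b) (2 * b + 4 * c))
  calc a * i + b * j + c * k ≤ a * i + (max (4 * b) (2 * b + 4 * c) * t + c * n) := by omega
    _ ≤ M * i + (M * t + c * n) := by
      gcongr ?_ * _ + (?_ * _ + _)
      exacts [le_max_left _ _, le_max_right _ _]
    _ = (i + t) * M + c * n := by ring

lemma exists_memP_linear_form_eq (m n a b c : ℕ) :
    ∃ i j k : ℕ, memP m n i j k ∧
      a * i + b * j + c * k = m * max a (max (4 * b) (2 * b + 4 * c)) + c * n := by
  rcases max_choice a (max (4 * b) (2 * b + 4 * c)) with h | h <;> rw [h]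
  · exact ⟨m, 0, n, ⟨by omega, by omega, by omega⟩, by ring⟩
  rcases max_choice (4 * b) (2 * b + 4 * c) with h | h <;> rw [h]
  · exact ⟨0, 4 * m, n, ⟨by omega, by omega, by omega⟩, by ring⟩
  · exact ⟨0, 2 * m, 4 * m + n, ⟨by omega, by omega, by omega⟩, by ring⟩

theorem max_value_formula_general (m n : ℕ)
    (a b c : ℕ) :
    (∀ i j k : ℕ, memP m n i j k →
      a * i + b * j + c * k ≤ m * max a (max (4 * b) (2 * b + 4 * c)) + c * n) ∧
    (∃ i j k : ℕ, memP m n i j k ∧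
      a * i + b * j + c * k = m * max a (max (4 * b) (2 * b + 4 * c)) + c * n) :=
  ⟨fun _ _ _ h => linear_form_le_of_memP a b c h, exists_memP_linear_form_eq m n a b c⟩

/-- The maximum of the linear form `f(i,j,k) = ai + bj + ck` over `P_{m,n}` equals
`m · max(a, 4b, 2b + 4c) + cn`. -/
theorem max_value_formula (m n : ℕ) (hm : 1 ≤ m)
    (a b c : ℕ) (habc : ¬(a = 0 ∧ b = 0 ∧ c = 0)) :
    (∀ i j k : ℕ, memP m n i j k →
      a * i + b * j + c * k ≤ m * max a (max (4 * b) (2 * b + 4 * c)) + c * n) ∧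
    (∃ i j k : ℕ, memP m n i j k ∧
      a * i + b * j + c * k = m * max a (max (4 * b) (2 * b + 4 * c)) + c * n) :=
  max_value_formula_general m n a b c
end

section
/- Let m ≥ 1, n ≥ 0 and let Q_{m,n}^* be the set of polynomials P ∈ K[x,y,z] whose support lies in {(i,j,k) ∈ ℕ³ : i+j ≤ m, 3i+3j+k ≤ 3m+n} and whose leading exponent in the lexicographic order with y > z > x is (0, m, n). Let γ = (X, Y, Z) be a polynomial automorphism of K[x,y,z] such that deg_{(4,1,0)}, deg_{(4,0,1)}, deg_{(8,2,1)} of X, Y, Z equal those of the components of β = (x+y²(y+z²)², y+z², z), and similarly the three cyclic lexicographic leading exponents of X, Y, Z agree with those of β's components (explicitly: for X they are (1,0,0), (0,4,0), (0,2,4); for Y: (0,1,0), (0,1,0), (0,0,2); for Z: (0,0,1), (0,0,1), (0,0,1); and deg_{(4,1,0)}, deg_{(4,0,1)}, deg_{(8,2,1)} of X are 4, 4, 8, of Y are 1, 2, 2, of Z are 0, 1, 1). Then for every P ∈ Q_{m,n}^*, the polynomial (P)πγ (apply the swap π = (y,x,z), then γ) lies in P_{m,n}^*, i.e., its support lies in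 P_{m,n} = {(i,j,k) : 4i+j ≤ 4m, 4i+k ≤ 4m+n, 8i+2j+k ≤ 8m+n}, its lex-leading exponent with y > z > x is (0, 4m, n), and its lex-leading exponent with z > x > y is (0, 2m, 4m+n). -/
open MvPolynomial

/-- Lexicographic key: `toLex (p, toLex (q, r))`. -/
def lkey (p q r : ℕ) : ℕ ×ₗ (ℕ ×ₗ ℕ) := toLex (p, toLex (q, r))

variable {K : Type*} [Field K]

/-- The `w`-weighted degree of a polynomial in `K[x,y,z]`. -/
noncomputable def degW (w1 w2 w3 : ℕ) (P : MvPolynomial (Fin 3) K) : ℕ :=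
  P.support.sup (fun d => w1 * d 0 + w2 * d 1 + w3 * d 2)

/-- `ldeg₁ P = (i,j,k)`: leading exponent in the lex order with `x > y > z`. -/
def HasLdeg1 (P : MvPolynomial (Fin 3) K) (i j k : ℕ) : Prop :=
  (∃ d ∈ P.support, d 0 = i ∧ d 1 = j ∧ d 2 = k) ∧
  ∀ d ∈ P.support, lkey (d 0) (d 1) (d 2) ≤ lkey i j k

/-- `ldeg₂ P = (i,j,k)`: leading exponent in the lex order with `y > z > x`. -/
def HasLdeg2 (P : MvPolynomial (Fin 3) K) (i j k : ℕ) : Prop :=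
  (∃ d ∈ P.support, d 0 = i ∧ d 1 = j ∧ d 2 = k) ∧
  ∀ d ∈ P.support, lkey (d 1) (d 2) (d 0) ≤ lkey j k i

/-- `ldeg₃ P = (i,j,k)`: leading exponent in the lex order with `z > x > y`. -/
def HasLdeg3 (P : MvPolynomial (Fin 3) K) (i j k : ℕ) : Prop :=
  (∃ d ∈ P.support, d 0 = i ∧ d 1 = j ∧ d 2 = k) ∧
  ∀ d ∈ P.support, lkey (d 2) (d 0) (d 1) ≤ lkey k i j

/-!
Substituting `(Y, X, Z)` into `x^i y^j z^k` gives `Y^i X^j Z^k`. Weighted degrees are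
subadditive on products, so on the support of `(P)πγ` each weight is bounded by the maximum of
`i deg_w Y + j deg_w X + k deg_w Z` over the support of `P`, and the inequalities defining
`Q_{m,n}` bound that maximum by the ones defining `P_{m,n}`. Leading exponents for a monomial
order are additive on products over a domain, so `Y^i X^j Z^k` has leading exponent
`i ldeg Y + j ldeg X + k ldeg Z`; for both `ldeg₂` and `ldeg₃` this linear map attains its
maximum on the support of `P ∈ Q*_{m,n}` only at `(0, m, n)`, and the corresponding term of
`(P)πγ` carries its leading exponent.
-/

open scoped MonomialOrder

namespace MvPolynomial

variable {σ τ R M : Type*} [CommSemiring R]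

theorem aeval_eq_sum_smul_prod [Fintype τ] (g : τ → MvPolynomial σ R) (P : MvPolynomial τ R) :
    aeval g P = ∑ e ∈ P.support, coeff e P • ∏ i, g i ^ e i := by
  simp only [aeval_def, eval₂_eq', algebraMap_eq, C_mul']

variable [AddCommMonoid M] [SemilatticeSup M] [OrderBot M] (w : σ → M)

theorem weightedTotalDegree_smul_le (c : R) (f : MvPolynomial σ R) :
    weightedTotalDegree w (c • f) ≤ weightedTotalDegree w f :=
  Finset.sup_mono support_smul

theorem weightedTotalDegree_sum_le {ι : Type*} (s : Finset ι) (f : ι → MvPolynomial σ R) :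
    weightedTotalDegree w (∑ i ∈ s, f i) ≤ s.sup fun i => weightedTotalDegree w (f i) := by
  classical
  refine Finset.sup_le fun d hd => ?_
  obtain ⟨i, hi, hd⟩ := Finset.mem_biUnion.mp (support_sum hd)
  exact (le_weightedTotalDegree w hd).trans
    (Finset.le_sup (f := fun i => weightedTotalDegree w (f i)) hi)

theorem weightedTotalDegree_one_le : weightedTotalDegree w (1 : MvPolynomial σ R) ≤ 0 :=
  Finset.sup_le fun d hd => by
    rw [← C_1, C_apply] at hd
    rw [Finset.mem_singleton.mp (support_monomial_subset hd), map_zero]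

variable [IsOrderedAddMonoid M]

theorem weightedTotalDegree_mul_le (f g : MvPolynomial σ R) :
    weightedTotalDegree w (f * g) ≤ weightedTotalDegree w f + weightedTotalDegree w g := by
  classical
  refine Finset.sup_le fun d hd => ?_
  obtain ⟨a, ha, b, hb, rfl⟩ := Finset.mem_add.mp (support_mul f g hd)
  rw [map_add]
  exact add_le_add (le_weightedTotalDegree w ha) (le_weightedTotalDegree w hb)

theorem weightedTotalDegree_pow_le (f : MvPolynomial σ R) (n : ℕ) :
    weightedTotalDegree w (f ^ n) ≤ n • weightedTotalDegree w f := by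
  induction n with
  | zero => simpa using weightedTotalDegree_one_le w
  | succ n ih =>
    rw [pow_succ, succ_nsmul]
    exact (weightedTotalDegree_mul_le w _ _).trans (add_le_add_left ih _)

theorem weightedTotalDegree_prod_le {ι : Type*} (s : Finset ι) (f : ι → MvPolynomial σ R) :
    weightedTotalDegree w (∏ i ∈ s, f i) ≤ ∑ i ∈ s, weightedTotalDegree w (f i) := by
  classical
  induction s using Finset.induction_on with
  | empty => simpa using weightedTotalDegree_one_le w
  | insert i s hi ih =>
    rw [Finset.prod_insert hi, Finset.sum_insert hi]
    exact (weightedTotalDegree_mul_le w _ _).trans (add_le_add_right ih _)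

theorem weightedTotalDegree_aeval_le [Fintype τ] (g : τ → MvPolynomial σ R)
    (P : MvPolynomial τ R) :
    weightedTotalDegree w (aeval g P) ≤
      P.support.sup fun e => ∑ i, e i • weightedTotalDegree w (g i) := by
  rw [aeval_eq_sum_smul_prod]
  refine (weightedTotalDegree_sum_le w _ _).trans (Finset.sup_mono_fun fun e _ => ?_)
  calc weightedTotalDegree w (coeff e P • ∏ i, g i ^ e i)
      ≤ ∑ i, weightedTotalDegree w (g i ^ e i) :=
        (weightedTotalDegree_smul_le w _ _).trans (weightedTotalDegree_prod_le w _ _)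
    _ ≤ ∑ i, e i • weightedTotalDegree w (g i) :=
        Finset.sum_le_sum fun i _ => weightedTotalDegree_pow_le w _ _

end MvPolynomial

namespace MonomialOrder

variable {σ τ R : Type*}

noncomputable def domCongr (m : MonomialOrder τ) (e : σ ≃ τ) : MonomialOrder σ where
  syn := m.syn
  toSyn := (Finsupp.domCongr e).trans m.toSyn
  toSyn_monotone a b h := m.toSyn_monotone (show Finsupp.domCongr e a ≤ Finsupp.domCongr e b from
    fun i => by simpa using h (e.symm i))

theorem domCongr_lt_iff (m : MonomialOrder τ) (e : σ ≃ τ) {a b : σ →₀ ℕ} :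
    a ≺[m.domCongr e] b ↔ Finsupp.domCongr e a ≺[m] Finsupp.domCongr e b := Iff.rfl

variable [CommRing R] (m : MonomialOrder σ)

theorem mem_support_and_forall_le_iff {f : MvPolynomial σ R} {e : σ →₀ ℕ} :
    (e ∈ f.support ∧ ∀ d ∈ f.support, d ≼[m] e) ↔ f ≠ 0 ∧ m.degree f = e := by
  constructor
  · rintro ⟨he, hle⟩
    refine ⟨ne_of_apply_ne support (Finset.ne_empty_of_mem he), ?_⟩
    exact m.toSyn.injective (le_antisymm (m.degree_le_iff.mpr hle) (m.le_degree he))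
  · rintro ⟨hf, rfl⟩
    exact ⟨m.degree_mem_support hf, fun d hd => m.le_degree hd⟩

theorem degree_sum_eq_of_forall_lt {ι : Type*} {s : Finset ι} {f : ι → MvPolynomial σ R}
    {i₀ : ι} (hi₀ : i₀ ∈ s) (hf : f i₀ ≠ 0)
    (hlt : ∀ i ∈ s, i ≠ i₀ → m.degree (f i) ≺[m] m.degree (f i₀)) :
    ∑ i ∈ s, f i ≠ 0 ∧ m.degree (∑ i ∈ s, f i) = m.degree (f i₀) := by
  classical
  set r := ∑ i ∈ s.erase i₀, f i
  have hr : ∀ d ∈ r.support, d ≺[m] m.degree (f i₀) := fun d hd => by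
    obtain ⟨i, hi, hd⟩ := Finset.mem_biUnion.mp (support_sum hd)
    exact (m.le_degree hd).trans_lt (hlt i (Finset.mem_of_mem_erase hi) (Finset.ne_of_mem_erase hi))
  rw [← Finset.add_sum_erase s f hi₀, ← mem_support_and_forall_le_iff]
  refine ⟨?_, fun d hd => ?_⟩
  · rw [mem_support_iff, coeff_add, notMem_support_iff.mp fun h => (hr _ h).ne rfl, add_zero]
    exact m.coeff_degree_ne_zero_iff.mpr hf
  · rcases Finset.mem_union.mp (support_add hd) with hd | hd
    · exact m.le_degree hd
    · exact (hr d hd).le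

theorem degree_aeval_eq_of_forall_lt [IsDomain R] [Fintype τ] {g : τ → MvPolynomial σ R}
    (hg : ∀ i, g i ≠ 0) {P : MvPolynomial τ R} {e₀ : τ →₀ ℕ} (he₀ : e₀ ∈ P.support)
    (hlt : ∀ e ∈ P.support, e ≠ e₀ →
      ∑ i, e i • m.degree (g i) ≺[m] ∑ i, e₀ i • m.degree (g i)) :
    aeval g P ≠ 0 ∧ m.degree (aeval g P) = ∑ i, e₀ i • m.degree (g i) := by
  have hterm : ∀ e ∈ P.support, coeff e P • ∏ i, g i ^ e i ≠ 0 ∧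
      m.degree (coeff e P • ∏ i, g i ^ e i) = ∑ i, e i • m.degree (g i) := fun e he => by
    have hc : coeff e P ≠ 0 := mem_support_iff.mp he
    have hprod : ∀ i ∈ Finset.univ, g i ^ e i ≠ 0 := fun i _ => pow_ne_zero _ (hg i)
    refine ⟨smul_ne_zero hc (Finset.prod_ne_zero_iff.mpr hprod), ?_⟩
    rw [m.degree_smul_of_isRegular (IsRegular.of_ne_zero hc), m.degree_prod hprod]
    simp only [m.degree_pow]
  rw [aeval_eq_sum_smul_prod, ← (hterm e₀ he₀).2]
  refine m.degree_sum_eq_of_forall_lt he₀ (hterm e₀ he₀).1 fun e he hne => ?_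
  rw [(hterm e he).2, (hterm e₀ he₀).2]
  exact hlt e he hne

end MonomialOrder

/-- The lexicographic order in which variable `k` is the most significant, followed cyclically
by `k + 1`, `k + 2`, …; thus `ldeg₂` and `ldeg₃` are the degrees for `cyclicLex 1` and
`cyclicLex 2`. -/
noncomputable def cyclicLex {n : ℕ} (k : Fin n) : MonomialOrder (Fin n) :=
  MonomialOrder.lex.domCongr (finCycle k).symm

theorem lkey_le_lkey {p q r p' q' r' : ℕ} :
    lkey p q r ≤ lkey p' q' r' ↔ p < p' ∨ p = p' ∧ (q < q' ∨ q = q' ∧ r ≤ r') := by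
  simp [lkey, Prod.Lex.le_iff]

theorem lkey_lt_lkey {p q r p' q' r' : ℕ} :
    lkey p q r < lkey p' q' r' ↔ p < p' ∨ p = p' ∧ (q < q' ∨ q = q' ∧ r < r') := by
  simp [lkey, Prod.Lex.lt_iff]

theorem cyclicLex_lt_iff (k : Fin 3) {d d' : Fin 3 →₀ ℕ} :
    d ≺[cyclicLex k] d' ↔
      lkey (d k) (d (k + 1)) (d (k + 2)) < lkey (d' k) (d' (k + 1)) (d' (k + 2)) := by
  rw [cyclicLex, MonomialOrder.domCongr_lt_iff, MonomialOrder.lex_lt_iff, Finsupp.Lex.lt_iff,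
    lkey_lt_lkey]
  simp [Fin.exists_fin_succ, Fin.forall_fin_succ, add_comm k, and_assoc]

theorem cyclicLex_le_iff (k : Fin 3) {d d' : Fin 3 →₀ ℕ} :
    d ≼[cyclicLex k] d' ↔
      lkey (d k) (d (k + 1)) (d (k + 2)) ≤ lkey (d' k) (d' (k + 1)) (d' (k + 2)) := by
  rw [← not_lt, ← not_lt, ← cyclicLex_lt_iff]

noncomputable def tripleExp (i j k : ℕ) : Fin 3 →₀ ℕ := Finsupp.equivFunOnFinite.symm ![i, j, k]

section

variable (i j k : ℕ)

@[simp] theorem tripleExp_zero : tripleExp i j k 0 = i := rfl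

@[simp] theorem tripleExp_one : tripleExp i j k 1 = j := rfl

@[simp] theorem tripleExp_two : tripleExp i j k 2 = k := rfl

end

theorem eq_tripleExp_iff {d : Fin 3 →₀ ℕ} {i j k : ℕ} :
    d = tripleExp i j k ↔ d 0 = i ∧ d 1 = j ∧ d 2 = k := by
  simp [Finsupp.ext_iff, Fin.forall_fin_succ]

section

variable {P : MvPolynomial (Fin 3) K} {i j k : ℕ}

theorem hasLdeg2_iff : HasLdeg2 P i j k ↔ P ≠ 0 ∧ (cyclicLex 1).degree P = tripleExp i j k := by
  rw [HasLdeg2, ← MonomialOrder.mem_support_and_forall_le_iff]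
  simp [cyclicLex_le_iff, ← eq_tripleExp_iff]

theorem hasLdeg3_iff : HasLdeg3 P i j k ↔ P ≠ 0 ∧ (cyclicLex 2).degree P = tripleExp i j k := by
  rw [HasLdeg3, ← MonomialOrder.mem_support_and_forall_le_iff]
  simp [cyclicLex_le_iff, ← eq_tripleExp_iff]

theorem HasLdeg2.tripleExp_mem_support (h : HasLdeg2 P i j k) : tripleExp i j k ∈ P.support := by
  obtain ⟨d, hd, hijk⟩ := h.1
  rwa [← eq_tripleExp_iff.mpr hijk]

end

theorem degW_eq_weightedTotalDegree (w1 w2 w3 : ℕ) (P : MvPolynomial (Fin 3) K) :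
    degW w1 w2 w3 P = weightedTotalDegree ![w1, w2, w3] P := by
  refine Finset.sup_congr rfl fun d _ => ?_
  simp [Finsupp.weight_apply, Finsupp.sum_fintype, Fin.sum_univ_three, mul_comm]

theorem le_degW_of_mem_support {w1 w2 w3 : ℕ} {P : MvPolynomial (Fin 3) K} {d : Fin 3 →₀ ℕ}
    (hd : d ∈ P.support) : w1 * d 0 + w2 * d 1 + w3 * d 2 ≤ degW w1 w2 w3 P :=
  Finset.le_sup (f := fun d : Fin 3 →₀ ℕ => w1 * d 0 + w2 * d 1 + w3 * d 2) hd

theorem degW_aeval_le {w1 w2 w3 N : ℕ} {A B C P : MvPolynomial (Fin 3) K}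
    (h : ∀ e ∈ P.support,
      e 0 * degW w1 w2 w3 A + e 1 * degW w1 w2 w3 B + e 2 * degW w1 w2 w3 C ≤ N) :
    degW w1 w2 w3 (aeval ![A, B, C] P) ≤ N := by
  rw [degW_eq_weightedTotalDegree]
  refine (weightedTotalDegree_aeval_le _ _ _).trans (Finset.sup_le fun e he => ?_)
  simpa [Fin.sum_univ_three, degW_eq_weightedTotalDegree] using h e he

section

variable {m n : ℕ} {Xp Yp Zp P : MvPolynomial (Fin 3) K}

theorem support_aeval_swap_bounds
    (hX1 : degW 4 1 0 Xp = 4) (hX2 : degW 4 0 1 Xp = 4) (hX3 : degW 8 2 1 Xp = 8)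
    (hY1 : degW 4 1 0 Yp = 1) (hY2 : degW 4 0 1 Yp = 2) (hY3 : degW 8 2 1 Yp = 2)
    (hZ1 : degW 4 1 0 Zp = 0) (hZ2 : degW 4 0 1 Zp = 1) (hZ3 : degW 8 2 1 Zp = 1)
    (hP : ∀ d ∈ P.support, d 0 + d 1 ≤ m ∧ 3 * d 0 + 3 * d 1 + d 2 ≤ 3 * m + n) :
    ∀ d ∈ (aeval ![Yp, Xp, Zp] P).support,
      4 * d 0 + d 1 ≤ 4 * m ∧ 4 * d 0 + d 2 ≤ 4 * m + n ∧
        8 * d 0 + 2 * d 1 + d 2 ≤ 8 * m + n := by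
  intro d hd
  have bound : ∀ {w1 w2 w3 N : ℕ}, (∀ e ∈ P.support,
      e 0 * degW w1 w2 w3 Yp + e 1 * degW w1 w2 w3 Xp + e 2 * degW w1 w2 w3 Zp ≤ N) →
      w1 * d 0 + w2 * d 1 + w3 * d 2 ≤ N :=
    fun h => (le_degW_of_mem_support hd).trans (degW_aeval_le h)
  have h1 := bound (w1 := 4) (w2 := 1) (w3 := 0) (N := 4 * m) fun e he => by
    have := hP e he; rw [hX1, hY1, hZ1]; omega
  have h2 := bound (w1 := 4) (w2 := 0) (w3 := 1) (N := 4 * m + n) fun e he => by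
    have := hP e he; rw [hX2, hY2, hZ2]; omega
  have h3 := bound (w1 := 8) (w2 := 2) (w3 := 1) (N := 8 * m + n) fun e he => by
    have := hP e he; rw [hX3, hY3, hZ3]; omega
  omega

theorem hasLdeg2_aeval_swap (hX : HasLdeg2 Xp 0 4 0) (hY : HasLdeg2 Yp 0 1 0)
    (hZ : HasLdeg2 Zp 0 0 1) (hP : ∀ d ∈ P.support, d 0 + d 1 ≤ m) (hPl : HasLdeg2 P 0 m n) :
    HasLdeg2 (aeval ![Yp, Xp, Zp] P) 0 (4 * m) n := by
  obtain ⟨hX0, hXd⟩ := hasLdeg2_iff.mp hX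
  obtain ⟨hY0, hYd⟩ := hasLdeg2_iff.mp hY
  obtain ⟨hZ0, hZd⟩ := hasLdeg2_iff.mp hZ
  obtain ⟨hP0, hPd⟩ := hasLdeg2_iff.mp hPl
  have hsum (e : Fin 3 →₀ ℕ) : ∑ i, e i • (cyclicLex 1).degree (![Yp, Xp, Zp] i) =
      tripleExp 0 (e 0 + 4 * e 1) (e 2) := by
    simp [eq_tripleExp_iff, Fin.sum_univ_three, hXd, hYd, hZd, mul_comm]
  rw [hasLdeg2_iff]
  convert (cyclicLex 1).degree_aeval_eq_of_forall_lt (g := ![Yp, Xp, Zp])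
    (by simp [Fin.forall_fin_succ, hX0, hY0, hZ0]) ((cyclicLex 1).degree_mem_support hP0)
    fun e he hne => ?_ using 2
  · rw [hsum, hPd]; simp
  · have hle := (cyclicLex_le_iff 1).mp ((cyclicLex 1).le_degree he)
    rw [hPd] at hne hle
    rw [hsum, hsum, hPd, cyclicLex_lt_iff]
    rw [Ne, eq_tripleExp_iff] at hne
    simp only [Fin.reduceAdd, tripleExp_zero, tripleExp_one, tripleExp_two, lkey_le_lkey,
      lkey_lt_lkey] at hle ⊢
    have := hP e he
    omega

theorem hasLdeg3_aeval_swap (hX : HasLdeg3 Xp 0 2 4) (hY : HasLdeg3 Yp 0 0 2)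
    (hZ : HasLdeg3 Zp 0 0 1)
    (hP : ∀ d ∈ P.support, d 0 + d 1 ≤ m ∧ 3 * d 0 + 3 * d 1 + d 2 ≤ 3 * m + n)
    (hmn : tripleExp 0 m n ∈ P.support) :
    HasLdeg3 (aeval ![Yp, Xp, Zp] P) 0 (2 * m) (4 * m + n) := by
  obtain ⟨hX0, hXd⟩ := hasLdeg3_iff.mp hX
  obtain ⟨hY0, hYd⟩ := hasLdeg3_iff.mp hY
  obtain ⟨hZ0, hZd⟩ := hasLdeg3_iff.mp hZ
  have hsum (e : Fin 3 →₀ ℕ) : ∑ i, e i • (cyclicLex 2).degree (![Yp, Xp, Zp] i) =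
      tripleExp 0 (2 * e 1) (2 * e 0 + 4 * e 1 + e 2) := by
    simp [eq_tripleExp_iff, Fin.sum_univ_three, hXd, hYd, hZd, mul_comm]
  rw [hasLdeg3_iff]
  convert (cyclicLex 2).degree_aeval_eq_of_forall_lt (g := ![Yp, Xp, Zp])
    (by simp [Fin.forall_fin_succ, hX0, hY0, hZ0]) hmn fun e he hne => ?_ using 2
  · rw [hsum]; simp
  · rw [hsum, hsum, cyclicLex_lt_iff]
    rw [Ne, eq_tripleExp_iff] at hne
    simp only [Fin.reduceAdd, tripleExp_zero, tripleExp_one, tripleExp_two, lkey_lt_lkey]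
    have := hP e he
    omega

end

theorem Qstar_to_Pstar_general (m n : ℕ)
    (Xp Yp Zp : MvPolynomial (Fin 3) K)
    -- weighted degrees of the components agree with those of β
    (hX1 : degW 4 1 0 Xp = 4) (hX2 : degW 4 0 1 Xp = 4) (hX3 : degW 8 2 1 Xp = 8)
    (hY1 : degW 4 1 0 Yp = 1) (hY2 : degW 4 0 1 Yp = 2) (hY3 : degW 8 2 1 Yp = 2)
    (hZ1 : degW 4 1 0 Zp = 0) (hZ2 : degW 4 0 1 Zp = 1) (hZ3 : degW 8 2 1 Zp = 1)
    -- cyclic lexicographic leading exponents agree with those of β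
    (hXl2 : HasLdeg2 Xp 0 4 0) (hXl3 : HasLdeg3 Xp 0 2 4)
    (hYl2 : HasLdeg2 Yp 0 1 0) (hYl3 : HasLdeg3 Yp 0 0 2)
    (hZl2 : HasLdeg2 Zp 0 0 1) (hZl3 : HasLdeg3 Zp 0 0 1)
    -- P ∈ Q*_{m,n}
    (P : MvPolynomial (Fin 3) K)
    (hPsupp : ∀ d ∈ P.support, d 0 + d 1 ≤ m ∧ 3 * d 0 + 3 * d 1 + d 2 ≤ 3 * m + n)
    (hPl2 : HasLdeg2 P 0 m n) :
    -- conclusion : (P)πγ ∈ P*_{m,n}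
    let Q : MvPolynomial (Fin 3) K := aeval ![Yp, Xp, Zp] P
    (∀ d ∈ Q.support,
        4 * d 0 + d 1 ≤ 4 * m ∧ 4 * d 0 + d 2 ≤ 4 * m + n ∧
        8 * d 0 + 2 * d 1 + d 2 ≤ 8 * m + n) ∧
    HasLdeg2 Q 0 (4 * m) n ∧ HasLdeg3 Q 0 (2 * m) (4 * m + n) :=
  ⟨support_aeval_swap_bounds hX1 hX2 hX3 hY1 hY2 hY3 hZ1 hZ2 hZ3 hPsupp,
    hasLdeg2_aeval_swap hXl2 hYl2 hZl2 (fun d hd => (hPsupp d hd).1) hPl2,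
    hasLdeg3_aeval_swap hXl3 hYl3 hZl3 hPsupp hPl2.tripleExp_mem_support⟩

/-- Lemma (from `Q*_{m,n}` to `P*_{m,n}`): if `γ = (Xp, Yp, Zp)` is a `β`-shaped
polynomial automorphism of `K[x,y,z]` and `P ∈ Q*_{m,n}`, then `(P)πγ ∈ P*_{m,n}`. -/
theorem Qstar_to_Pstar (m n : ℕ) (hm : 1 ≤ m)
    (Xp Yp Zp : MvPolynomial (Fin 3) K)
    (hbij : Function.Bijective
      (aeval ![Xp, Yp, Zp] : MvPolynomial (Fin 3) K →ₐ[K] MvPolynomial (Fin 3) K))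
    -- weighted degrees of the components agree with those of β
    (hX1 : degW 4 1 0 Xp = 4) (hX2 : degW 4 0 1 Xp = 4) (hX3 : degW 8 2 1 Xp = 8)
    (hY1 : degW 4 1 0 Yp = 1) (hY2 : degW 4 0 1 Yp = 2) (hY3 : degW 8 2 1 Yp = 2)
    (hZ1 : degW 4 1 0 Zp = 0) (hZ2 : degW 4 0 1 Zp = 1) (hZ3 : degW 8 2 1 Zp = 1)
    -- cyclic lexicographic leading exponents agree with those of β
    (hXl1 : HasLdeg1 Xp 1 0 0) (hXl2 : HasLdeg2 Xp 0 4 0) (hXl3 : HasLdeg3 Xp 0 2 4)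
    (hYl1 : HasLdeg1 Yp 0 1 0) (hYl2 : HasLdeg2 Yp 0 1 0) (hYl3 : HasLdeg3 Yp 0 0 2)
    (hZl1 : HasLdeg1 Zp 0 0 1) (hZl2 : HasLdeg2 Zp 0 0 1) (hZl3 : HasLdeg3 Zp 0 0 1)
    -- P ∈ Q*_{m,n}
    (P : MvPolynomial (Fin 3) K)
    (hPsupp : ∀ d ∈ P.support, d 0 + d 1 ≤ m ∧ 3 * d 0 + 3 * d 1 + d 2 ≤ 3 * m + n)
    (hPl2 : HasLdeg2 P 0 m n) :
    -- conclusion : (P)πγ ∈ P*_{m,n}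
    let Q : MvPolynomial (Fin 3) K := aeval ![Yp, Xp, Zp] P
    (∀ d ∈ Q.support,
        4 * d 0 + d 1 ≤ 4 * m ∧ 4 * d 0 + d 2 ≤ 4 * m + n ∧
        8 * d 0 + 2 * d 1 + d 2 ≤ 8 * m + n) ∧
    HasLdeg2 Q 0 (4 * m) n ∧ HasLdeg3 Q 0 (2 * m) (4 * m + n) :=
  Qstar_to_Pstar_general m n Xp Yp Zp hX1 hX2 hX3 hY1 hY2 hY3 hZ1 hZ2 hZ3 hXl2 hXl3 hYl2 hYl3 hZl2
    hZl3 P hPsupp hPl2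
end

section
/- Let α = (u⁸x + c₁z + d₁, u²y, uz) with u ∈ K*, c₁, d₁ ∈ K, let β = (x + y²(y+z²)², y+z², z), β⁻¹ = (x − y²(y−z²)², y−z², z), and π = (y,x,z), all automorphisms of K[x,y,z]. Then the composite πβ⁻¹αβπ equals the affine triangular automorphism (u²x, u⁸y + c₁z + d₁, uz). -/
open MvPolynomial

/-!
The map `α` scales `x, y, z` by `u⁸, u², u` and adds `c₁z + d₁` to `x`. The coordinates
`y + z²` and `y²(y + z²)²` of `β` are weighted homogeneous of degrees `2` and `8` for the
weights `(8, 2, 1)`, and `β` does not change `z`, so `α` commutes with `β`. Hence `β⁻¹αβ = α`,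
and conjugating `α` by the transposition `π` exchanges the roles of `x` and `y`.
-/

namespace MvPolynomial

variable {R : Type*} [CommRing R]

noncomputable def cubicShear : MvPolynomial (Fin 3) R →ₐ[R] MvPolynomial (Fin 3) R :=
  aeval ![X 0 + X 1 ^ 2 * (X 1 + X 2 ^ 2) ^ 2, X 1 + X 2 ^ 2, X 2]

noncomputable def cubicShearInv : MvPolynomial (Fin 3) R →ₐ[R] MvPolynomial (Fin 3) R :=
  aeval ![X 0 - X 1 ^ 2 * (X 1 - X 2 ^ 2) ^ 2, X 1 - X 2 ^ 2, X 2]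

noncomputable def weightedAffine (u c d : R) :
    MvPolynomial (Fin 3) R →ₐ[R] MvPolynomial (Fin 3) R :=
  aeval ![C (u ^ 8) * X 0 + C c * X 2 + C d, C (u ^ 2) * X 1, C u * X 2]

noncomputable def swapXY : MvPolynomial (Fin 3) R →ₐ[R] MvPolynomial (Fin 3) R :=
  aeval ![X 1, X 0, X 2]

theorem cubicShear_comp_cubicShearInv :
    (cubicShear (R := R)).comp cubicShearInv = AlgHom.id R _ := by
  ext i : 1
  fin_cases i <;> simp [cubicShear, cubicShearInv]
  ring

theorem cubicShear_comp_weightedAffine (u c d : R) :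
    cubicShear.comp (weightedAffine u c d) = (weightedAffine u c d).comp cubicShear := by
  ext i : 1
  fin_cases i <;> simp [cubicShear, weightedAffine] <;> ring

theorem swapXY_comp_weightedAffine_comp_swapXY (u c d : R) :
    swapXY.comp ((weightedAffine u c d).comp swapXY) =
      aeval ![C (u ^ 2) * X 0, C (u ^ 8) * X 1 + C c * X 2 + C d, C u * X 2] := by
  ext i : 1
  fin_cases i <;> simp [swapXY, weightedAffine]

theorem cubicShear_comp_weightedAffine_comp_cubicShearInv (u c d : R) :
    cubicShear.comp ((weightedAffine u c d).comp cubicShearInv) = weightedAffine u c d := by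
  rw [← AlgHom.comp_assoc, cubicShear_comp_weightedAffine, AlgHom.comp_assoc,
    cubicShear_comp_cubicShearInv, AlgHom.comp_id]

end MvPolynomial

/-- For `α = (u⁸x + c₁z + d₁, u²y, uz)`, the composite `πβ⁻¹αβπ` (apply `π`, then
`β⁻¹`, then `α`, then `β`, then `π`) equals `(u²x, u⁸y + c₁z + d₁, uz)`. -/
theorem composite_A3 (K : Type*) [Field K] (u : Kˣ) (c1 d1 : K) :
    let hπ : MvPolynomial (Fin 3) K →ₐ[K] MvPolynomial (Fin 3) K :=
      aeval ![X 1, X 0, X 2]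
    let hβ : MvPolynomial (Fin 3) K →ₐ[K] MvPolynomial (Fin 3) K :=
      aeval ![X 0 + (X 1) ^ 2 * (X 1 + (X 2) ^ 2) ^ 2, X 1 + (X 2) ^ 2, X 2]
    let hβi : MvPolynomial (Fin 3) K →ₐ[K] MvPolynomial (Fin 3) K :=
      aeval ![X 0 - (X 1) ^ 2 * (X 1 - (X 2) ^ 2) ^ 2, X 1 - (X 2) ^ 2, X 2]
    let hα : MvPolynomial (Fin 3) K →ₐ[K] MvPolynomial (Fin 3) K :=
      aeval ![C ((u : K) ^ 8) * X 0 + C c1 * X 2 + C d1, C ((u : K) ^ 2) * X 1,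
        C (u : K) * X 2]
    hπ.comp (hβ.comp (hα.comp (hβi.comp hπ))) =
      aeval ![C ((u : K) ^ 2) * X 0, C ((u : K) ^ 8) * X 1 + C c1 * X 2 + C d1,
        C (u : K) * X 2] := by
  show swapXY.comp (cubicShear.comp ((weightedAffine (u : K) c1 d1).comp
    (cubicShearInv.comp swapXY))) = _
  rw [← AlgHom.comp_assoc _ cubicShearInv, ← AlgHom.comp_assoc cubicShear,
    cubicShear_comp_weightedAffine_comp_cubicShearInv, swapXY_comp_weightedAffine_comp_swapXY]
end

section
/- Let α = (u⁸x + b₁y + c₁z + d₁, u²y, uz) with u, b₁ ∈ K* and c₁, d₁ ∈ K, and let β = (x + y²(y+z²)², y+z², z), π = (y,x,z). Writing X = x + y²(y+z²)² and Y = y + z², the composite automorphism πβ⁻¹αβπβ of K[x,y,z] equals (u²X, u⁸Y + b₁X + b₁z² + c₁z + d₁, uz). -/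
/-!
Write `β` for the substitution `(x + y²(y + z²)², y + z², z)`. Conjugating `α` by `β` gives the
triangular map `(u⁸x + b₁y + b₁z² + c₁z + d₁, u²y, uz)`: `α` rescales `y - z²` by `u²`, so it
rescales the correction term `y²(y - z²)²` by `u⁸`, the coefficient of `x`, and the two
corrections cancel; only `b₁y` picks up the extra `b₁z²`. Conjugating by `π` swaps the first two
coordinates, and the outer `β` substitutes `X` for `x` and `Y` for `y`.
-/

open MvPolynomial

section

variable {R : Type*} [CommRing R]

theorem aeval_conj_beta_triangular (u b c d : R) :
    (aeval (R := R) (S₁ := MvPolynomial (Fin 3) R)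
        ![X 0 + X 1 ^ 2 * (X 1 + X 2 ^ 2) ^ 2, X 1 + X 2 ^ 2, X 2]).comp
      ((aeval ![C (u ^ 8) * X 0 + C b * X 1 + C c * X 2 + C d, C (u ^ 2) * X 1, C u * X 2]).comp
        (aeval ![X 0 - X 1 ^ 2 * (X 1 - X 2 ^ 2) ^ 2, X 1 - X 2 ^ 2, X 2])) =
      aeval ![C (u ^ 8) * X 0 + C b * X 1 + C b * X 2 ^ 2 + C c * X 2 + C d,
        C (u ^ 2) * X 1, C u * X 2] := by
  rw [comp_aeval, comp_aeval]
  congr 1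
  funext i
  fin_cases i <;> simp <;> ring

theorem aeval_conj_swap_triangular (u b c d : R) :
    (aeval (R := R) (S₁ := MvPolynomial (Fin 3) R) ![X 1, X 0, X 2]).comp
      ((aeval ![C (u ^ 8) * X 0 + C b * X 1 + C b * X 2 ^ 2 + C c * X 2 + C d,
        C (u ^ 2) * X 1, C u * X 2]).comp (aeval ![X 1, X 0, X 2])) =
      aeval ![C (u ^ 2) * X 0, C (u ^ 8) * X 1 + C b * X 0 + C b * X 2 ^ 2 + C c * X 2 + C d,
        C u * X 2] := by
  rw [comp_aeval, comp_aeval]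
  congr 1
  funext i
  fin_cases i <;> simp

end

/-- For `α = (u⁸x + b₁y + c₁z + d₁, u²y, uz)` with `u, b₁ ∈ K*`, writing
`Xp = x + y²(y+z²)²` and `Yp = y + z²`, the composite `πβ⁻¹αβπβ` equals
`(u²Xp, u⁸Yp + b₁Xp + b₁z² + c₁z + d₁, uz)`. -/
theorem composite_A2 (K : Type*) [Field K] (u b1 : Kˣ) (c1 d1 : K) :
    let Xp : MvPolynomial (Fin 3) K := X 0 + (X 1) ^ 2 * (X 1 + (X 2) ^ 2) ^ 2
    let Yp : MvPolynomial (Fin 3) K := X 1 + (X 2) ^ 2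
    let hπ : MvPolynomial (Fin 3) K →ₐ[K] MvPolynomial (Fin 3) K :=
      aeval ![X 1, X 0, X 2]
    let hβ : MvPolynomial (Fin 3) K →ₐ[K] MvPolynomial (Fin 3) K :=
      aeval ![Xp, Yp, X 2]
    let hβi : MvPolynomial (Fin 3) K →ₐ[K] MvPolynomial (Fin 3) K :=
      aeval ![X 0 - (X 1) ^ 2 * (X 1 - (X 2) ^ 2) ^ 2, X 1 - (X 2) ^ 2, X 2]
    let hα : MvPolynomial (Fin 3) K →ₐ[K] MvPolynomial (Fin 3) K :=
      aeval ![C ((u : K) ^ 8) * X 0 + C (b1 : K) * X 1 + C c1 * X 2 + C d1,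
        C ((u : K) ^ 2) * X 1, C (u : K) * X 2]
    hβ.comp (hπ.comp (hβ.comp (hα.comp (hβi.comp hπ)))) =
      aeval ![C ((u : K) ^ 2) * Xp,
        C ((u : K) ^ 8) * Yp + C (b1 : K) * Xp + C (b1 : K) * (X 2) ^ 2
          + C c1 * X 2 + C d1,
        C (u : K) * X 2] := by
  dsimp only
  rw [← AlgHom.comp_assoc _ _ (aeval ![X 1, X 0, X 2]),
    ← AlgHom.comp_assoc _ _ (aeval ![X 1, X 0, X 2]), aeval_conj_beta_triangular,
    aeval_conj_swap_triangular, comp_aeval]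
  congr 1
  funext i
  fin_cases i <;> simp
end
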